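/- Let n ≥ 1, T > 0 and M > 0. Let u : ℝⁿ × [0,T] → ℝ be a smooth positive solution of the heat equation ∂ₜu = Δu on ℝⁿ × [0,T] satisfying 0 < u ≤ M everywhere. Then the function Φ(x,t) := t · ‖∇u(x,t)‖² / u(x,t) − u(x,t)·log(M / u(x,t)) satisfies ΔΦ − ∂ₜΦ ≥ 0 on ℝⁿ × (0,T], i.e. Φ is a subsolution of the heat equation. -/

import Mathlib

/-!
Write `Q = ‖∇u‖² / u`. The quotient rule for `Δ`, Bochner's formula
`Δ‖∇f‖² = 2 ⟨∇f, ∇Δf⟩ + 2 ‖∇²f‖²`, and `∂ₜ ∂ⱼ u = ∂ⱼ ∂ₜ u = ∂ⱼ Δu` give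
`(Δ - ∂ₜ) Q = (2 / u³) ∑ᵢⱼ (u ∂ᵢ∂ⱼu - ∂ᵢu ∂ⱼu)² ≥ 0`. For `ψ(s) = s log (M / s)` the chain rule
gives `(Δ - ∂ₜ) ψ(u) = ψ''(u) ‖∇u‖² = -Q`. Hence `(Δ - ∂ₜ) Φ = t (Δ - ∂ₜ) Q - Q + Q ≥ 0`.
-/

open Set

/-- The Laplacian of `f : ℝⁿ → ℝ` (flat Euclidean metric): the trace of the
second derivative, i.e. the sum of the second partial derivatives. -/
noncomputable def lap {n : ℕ} (f : EuclideanSpace ℝ (Fin n) → ℝ)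
    (x : EuclideanSpace ℝ (Fin n)) : ℝ :=
  ∑ i : Fin n,
    fderiv ℝ (fun y => fderiv ℝ f y (EuclideanSpace.single i 1)) x
      (EuclideanSpace.single i 1)

section DirDeriv

variable {F : Type*} [NormedAddCommGroup F] [NormedSpace ℝ F] {f g : F → ℝ} {v y : F}

noncomputable def dirDeriv (v : F) (f : F → ℝ) (y : F) : ℝ := fderiv ℝ f y v

lemma contDiff_dirDeriv {k m : WithTop ℕ∞} (hf : ContDiff ℝ k f) (hmk : m + 1 ≤ k) (v : F) :
    ContDiff ℝ m (dirDeriv v f) :=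
  (hf.fderiv_right hmk).clm_apply contDiff_const

lemma ContDiff.differentiable_dirDeriv (hf : ContDiff ℝ 2 f) (v : F) :
    Differentiable ℝ (dirDeriv v f) :=
  (contDiff_dirDeriv hf (m := 1) (by norm_num) v).differentiable one_ne_zero

lemma dirDeriv_add (hf : DifferentiableAt ℝ f y) (hg : DifferentiableAt ℝ g y) :
    dirDeriv v (fun z => f z + g z) y = dirDeriv v f y + dirDeriv v g y := by
  simp [dirDeriv, fderiv_fun_add hf hg]

lemma dirDeriv_sub (hf : DifferentiableAt ℝ f y) (hg : DifferentiableAt ℝ g y) :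
    dirDeriv v (fun z => f z - g z) y = dirDeriv v f y - dirDeriv v g y := by
  simp [dirDeriv, fderiv_fun_sub hf hg]

lemma dirDeriv_const_mul (hf : DifferentiableAt ℝ f y) (c : ℝ) :
    dirDeriv v (fun z => c * f z) y = c * dirDeriv v f y := by
  simp [dirDeriv, fderiv_const_mul hf]

lemma dirDeriv_mul (hf : DifferentiableAt ℝ f y) (hg : DifferentiableAt ℝ g y) :
    dirDeriv v (fun z => f z * g z) y = f y * dirDeriv v g y + g y * dirDeriv v f y := by
  simp [dirDeriv, fderiv_fun_mul hf hg]

lemma dirDeriv_comp {φ : ℝ → ℝ} {φ' : ℝ} (hφ : HasDerivAt φ φ' (f y))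
    (hf : DifferentiableAt ℝ f y) :
    dirDeriv v (fun z => φ (f z)) y = φ' * dirDeriv v f y := by
  have h : HasFDerivAt (fun z => φ (f z)) (φ' • fderiv ℝ f y) y :=
    hφ.comp_hasFDerivAt y hf.hasFDerivAt
  simp [dirDeriv, h.fderiv]

lemma dirDeriv_sum {ι : Type*} (s : Finset ι) {f : ι → F → ℝ}
    (hf : ∀ i ∈ s, DifferentiableAt ℝ (f i) y) :
    dirDeriv v (fun z => ∑ i ∈ s, f i z) y = ∑ i ∈ s, dirDeriv v (f i) y := by
  simp [dirDeriv, fderiv_fun_sum hf]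

lemma dirDeriv_comm (hf : ContDiff ℝ 2 f) (v w y : F) :
    dirDeriv v (dirDeriv w f) y = dirDeriv w (dirDeriv v f) y := by
  have hsymm := (hf.contDiffAt (x := y)).isSymmSndFDerivAt (by simp)
  have hd : DifferentiableAt ℝ (fderiv ℝ f) y :=
    (hf.fderiv_right (m := 1) le_rfl).differentiable one_ne_zero y
  have key : ∀ a b : F, dirDeriv a (dirDeriv b f) y = fderiv ℝ (fderiv ℝ f) y a b := fun a b => by
    show fderiv ℝ (fun z => fderiv ℝ f z b) y a = _
    rw [fderiv_clm_apply hd (differentiableAt_const b)]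
    simp
  rw [key, key, hsymm]

lemma dirDeriv_dirDeriv_mul (hf : ContDiff ℝ 2 f) (hg : ContDiff ℝ 2 g) (v w y : F) :
    dirDeriv v (dirDeriv w (fun z => f z * g z)) y
      = f y * dirDeriv v (dirDeriv w g) y + g y * dirDeriv v (dirDeriv w f) y
        + dirDeriv v f y * dirDeriv w g y + dirDeriv v g y * dirDeriv w f y := by
  have hf₁ := hf.differentiable two_ne_zero
  have hg₁ := hg.differentiable two_ne_zero
  have h : dirDeriv w (fun z => f z * g z)
      = fun z => f z * dirDeriv w g z + g z * dirDeriv w f z :=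
    funext fun z => dirDeriv_mul (hf₁ z) (hg₁ z)
  have hfg : DifferentiableAt ℝ (fun z => f z * dirDeriv w g z) y :=
    (hf₁ y).mul (hg.differentiable_dirDeriv w y)
  have hgf : DifferentiableAt ℝ (fun z => g z * dirDeriv w f z) y :=
    (hg₁ y).mul (hf.differentiable_dirDeriv w y)
  rw [h, dirDeriv_add hfg hgf, dirDeriv_mul (hf₁ y) (hg.differentiable_dirDeriv w y),
    dirDeriv_mul (hg₁ y) (hf.differentiable_dirDeriv w y)]
  ring

lemma dirDeriv_dirDeriv_comp {φ φ' φ'' : ℝ → ℝ} (hf : ContDiff ℝ 2 f)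
    (hφ : ∀ z, HasDerivAt φ (φ' (f z)) (f z)) (hφ' : ∀ z, HasDerivAt φ' (φ'' (f z)) (f z))
    (v w y : F) :
    dirDeriv v (dirDeriv w (fun z => φ (f z))) y
      = φ' (f y) * dirDeriv v (dirDeriv w f) y + φ'' (f y) * dirDeriv v f y * dirDeriv w f y := by
  have hf₁ := hf.differentiable two_ne_zero
  have h : dirDeriv w (fun z => φ (f z)) = fun z => φ' (f z) * dirDeriv w f z :=
    funext fun z => dirDeriv_comp (hφ z) (hf₁ z)
  rw [h, dirDeriv_mul (((hφ' y).differentiableAt).fun_comp' y (hf₁ y))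
      (hf.differentiable_dirDeriv w y),
    dirDeriv_comp (hφ' y) (hf₁ y)]
  ring

end DirDeriv

lemma hasDerivAt_neg_inv_sq {s : ℝ} (hs : s ≠ 0) :
    HasDerivAt (fun r => -(r ^ 2)⁻¹) (2 * (s ^ 3)⁻¹) s := by
  refine ((hasDerivAt_pow 2 s).inv (pow_ne_zero 2 hs)).neg.congr_deriv ?_
  field_simp
  ring

lemma hasDerivAt_mul_log_div {M s : ℝ} (hM : M ≠ 0) (hs : s ≠ 0) :
    HasDerivAt (fun r => r * Real.log (M / r)) (Real.log (M / s) - 1) s := by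
  have h := (hasDerivAt_id s).mul (((hasDerivAt_const s M).div (hasDerivAt_id s) hs).log
    (div_ne_zero hM hs))
  refine h.congr_deriv ?_
  simp only [Pi.div_apply, id]
  field_simp
  ring

lemma sum_sum_mul_sub_mul_sq {ι : Type*} (s : Finset ι) (c : ℝ) (a : ι → ℝ) (B : ι → ι → ℝ) :
    ∑ i ∈ s, ∑ j ∈ s, (c * B i j - a i * a j) ^ 2
      = c ^ 2 * ∑ i ∈ s, ∑ j ∈ s, B i j ^ 2 - 2 * c * ∑ i ∈ s, a i * ∑ j ∈ s, a j * B i j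
        + (∑ i ∈ s, a i ^ 2) ^ 2 := by
  rw [sq (∑ i ∈ s, a i ^ 2), Finset.sum_mul_sum]
  simp only [Finset.mul_sum, ← Finset.sum_sub_distrib,
    ← Finset.sum_add_distrib]
  exact Finset.sum_congr rfl fun i _ => Finset.sum_congr rfl fun j _ => by ring

local notation "𝐞" i => EuclideanSpace.single i (1 : ℝ)

section Laplacian

variable {n : ℕ} {f g : EuclideanSpace ℝ (Fin n) → ℝ}

lemma lap_eq_sum_dirDeriv (f : EuclideanSpace ℝ (Fin n) → ℝ) (x : EuclideanSpace ℝ (Fin n)) :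
    lap f x = ∑ i, dirDeriv (𝐞 i) (dirDeriv (𝐞 i) f) x :=
  rfl

lemma norm_gradient_sq (f : EuclideanSpace ℝ (Fin n) → ℝ) (x : EuclideanSpace ℝ (Fin n)) :
    ‖gradient f x‖ ^ 2 = ∑ i, dirDeriv (𝐞 i) f x ^ 2 := by
  have h : ∀ i, gradient f x i = dirDeriv (𝐞 i) f x := fun i => by
    rw [dirDeriv, ← InnerProductSpace.toDual_symm_apply, ← gradient,
      EuclideanSpace.inner_single_right]
    simp
  simp [EuclideanSpace.norm_sq_eq, h]

lemma contDiff_norm_gradient_sq {k m : WithTop ℕ∞} (hf : ContDiff ℝ k f) (hmk : m + 1 ≤ k) :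
    ContDiff ℝ m (fun y => ‖gradient f y‖ ^ 2) := by
  simp only [norm_gradient_sq]
  exact ContDiff.sum fun i _ => (contDiff_dirDeriv hf hmk _).pow 2

lemma lap_sub (hf : ContDiff ℝ 2 f) (hg : ContDiff ℝ 2 g) (x : EuclideanSpace ℝ (Fin n)) :
    lap (fun y => f y - g y) x = lap f x - lap g x := by
  have hf₁ := hf.differentiable two_ne_zero
  have hg₁ := hg.differentiable two_ne_zero
  have h : ∀ i, dirDeriv (𝐞 i) (fun y => f y - g y)
      = fun y => dirDeriv (𝐞 i) f y - dirDeriv (𝐞 i) g y :=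
    fun i => funext fun y => dirDeriv_sub (hf₁ y) (hg₁ y)
  simp only [lap_eq_sum_dirDeriv, h, ← Finset.sum_sub_distrib]
  exact Finset.sum_congr rfl fun i _ =>
    dirDeriv_sub (hf.differentiable_dirDeriv _ x) (hg.differentiable_dirDeriv _ x)

lemma lap_const_mul (hf : ContDiff ℝ 2 f) (c : ℝ) (x : EuclideanSpace ℝ (Fin n)) :
    lap (fun y => c * f y) x = c * lap f x := by
  have h : ∀ i, dirDeriv (𝐞 i) (fun y => c * f y) = fun y => c * dirDeriv (𝐞 i) f y :=
    fun i => funext fun y => dirDeriv_const_mul (hf.differentiable two_ne_zero y) c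
  simp only [lap_eq_sum_dirDeriv, h, Finset.mul_sum]
  exact Finset.sum_congr rfl fun i _ => dirDeriv_const_mul (hf.differentiable_dirDeriv _ x) c

lemma lap_sum {ι : Type*} (s : Finset ι) {f : ι → EuclideanSpace ℝ (Fin n) → ℝ}
    (hf : ∀ j ∈ s, ContDiff ℝ 2 (f j)) (x : EuclideanSpace ℝ (Fin n)) :
    lap (fun y => ∑ j ∈ s, f j y) x = ∑ j ∈ s, lap (f j) x := by
  have h : ∀ i, dirDeriv (𝐞 i) (fun y => ∑ j ∈ s, f j y)
      = fun y => ∑ j ∈ s, dirDeriv (𝐞 i) (f j) y :=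
    fun i => funext fun y => dirDeriv_sum s fun j hj => (hf j hj).differentiable two_ne_zero y
  simp only [lap_eq_sum_dirDeriv, h]
  rw [Finset.sum_comm]
  exact Finset.sum_congr rfl fun i _ =>
    dirDeriv_sum s fun j hj => (hf j hj).differentiable_dirDeriv _ x

lemma lap_mul (hf : ContDiff ℝ 2 f) (hg : ContDiff ℝ 2 g) (x : EuclideanSpace ℝ (Fin n)) :
    lap (fun y => f y * g y) x
      = f x * lap g x + g x * lap f x + 2 * ∑ i, dirDeriv (𝐞 i) f x * dirDeriv (𝐞 i) g x := by
  simp only [lap_eq_sum_dirDeriv, dirDeriv_dirDeriv_mul hf hg, Finset.mul_sum,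
    ← Finset.sum_add_distrib]
  exact Finset.sum_congr rfl fun i _ => by ring

lemma lap_comp {φ φ' φ'' : ℝ → ℝ} (hf : ContDiff ℝ 2 f)
    (hφ : ∀ z, HasDerivAt φ (φ' (f z)) (f z)) (hφ' : ∀ z, HasDerivAt φ' (φ'' (f z)) (f z))
    (x : EuclideanSpace ℝ (Fin n)) :
    lap (fun y => φ (f y)) x = φ' (f x) * lap f x + φ'' (f x) * ‖gradient f x‖ ^ 2 := by
  simp only [lap_eq_sum_dirDeriv, dirDeriv_dirDeriv_comp hf hφ hφ', norm_gradient_sq,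
    Finset.mul_sum, ← Finset.sum_add_distrib]
  exact Finset.sum_congr rfl fun i _ => by ring

lemma dirDeriv_lap (hf : ContDiff ℝ 3 f) (v x : EuclideanSpace ℝ (Fin n)) :
    dirDeriv v (lap f) x = lap (dirDeriv v f) x := by
  have hf₂ : ∀ i, ContDiff ℝ 2 (dirDeriv (𝐞 i) f) := fun i => contDiff_dirDeriv hf (by norm_num) _
  have hcomm : ∀ i, dirDeriv v (dirDeriv (𝐞 i) f) = dirDeriv (𝐞 i) (dirDeriv v f) :=
    fun i => funext (dirDeriv_comm (hf.of_le (by norm_num)) v (𝐞 i))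
  have h : lap f = fun y => ∑ i, dirDeriv (𝐞 i) (dirDeriv (𝐞 i) f) y := rfl
  rw [h, dirDeriv_sum _ fun i _ => (hf₂ i).differentiable_dirDeriv _ x, lap_eq_sum_dirDeriv]
  refine Finset.sum_congr rfl fun i _ => ?_
  rw [dirDeriv_comm (hf₂ i), hcomm]

lemma lap_div (hg : ContDiff ℝ 2 g) (hf : ContDiff ℝ 2 f) (hf0 : ∀ z, f z ≠ 0)
    (x : EuclideanSpace ℝ (Fin n)) :
    lap (fun y => g y / f y) x
      = lap g x / f x - 2 * (∑ i, dirDeriv (𝐞 i) g x * dirDeriv (𝐞 i) f x) / f x ^ 2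
        - g x * lap f x / f x ^ 2 + 2 * g x * ‖gradient f x‖ ^ 2 / f x ^ 3 := by
  have hinv : ∀ z, HasDerivAt (fun r => r⁻¹) (-(f z ^ 2)⁻¹) (f z) := fun z => hasDerivAt_inv (hf0 z)
  have hdinv : ∀ i, dirDeriv (𝐞 i) (fun y => (f y)⁻¹) x = -(f x ^ 2)⁻¹ * dirDeriv (𝐞 i) f x :=
    fun i => dirDeriv_comp (hinv x) (hf.differentiable two_ne_zero x)
  have hdiv : (fun y => g y / f y) = fun y => g y * (f y)⁻¹ := funext fun y => div_eq_mul_inv _ _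
  have hf' : ContDiff ℝ 2 (fun y => (f y)⁻¹) := hf.inv hf0
  rw [hdiv, lap_mul hg hf', lap_comp (φ' := fun r => -(r ^ 2)⁻¹) (φ'' := fun r => 2 * (r ^ 3)⁻¹)
    hf hinv fun z => hasDerivAt_neg_inv_sq (hf0 z)]
  simp only [hdinv, mul_left_comm _ (-(f x ^ 2)⁻¹), ← Finset.mul_sum]
  have := hf0 x
  field_simp
  ring

lemma dirDeriv_norm_gradient_sq (hf : ContDiff ℝ 2 f) (v x : EuclideanSpace ℝ (Fin n)) :
    dirDeriv v (fun y => ‖gradient f y‖ ^ 2) x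
      = 2 * ∑ j, dirDeriv (𝐞 j) f x * dirDeriv v (dirDeriv (𝐞 j) f) x := by
  simp only [norm_gradient_sq]
  rw [dirDeriv_sum (f := fun j y => dirDeriv (𝐞 j) f y ^ 2) _
    fun j _ => (hf.differentiable_dirDeriv _ x).pow 2, Finset.mul_sum]
  refine Finset.sum_congr rfl fun j _ => ?_
  rw [dirDeriv_comp (hasDerivAt_pow 2 _) (hf.differentiable_dirDeriv _ x)]
  ring

lemma lap_norm_gradient_sq (hf : ContDiff ℝ 3 f) (x : EuclideanSpace ℝ (Fin n)) :
    lap (fun y => ‖gradient f y‖ ^ 2) x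
      = 2 * ∑ j, dirDeriv (𝐞 j) f x * dirDeriv (𝐞 j) (lap f) x
        + 2 * ∑ j, ‖gradient (dirDeriv (𝐞 j) f) x‖ ^ 2 := by
  have hf₂ : ∀ j, ContDiff ℝ 2 (dirDeriv (𝐞 j) f) := fun j => contDiff_dirDeriv hf (by norm_num) _
  simp only [norm_gradient_sq f]
  rw [lap_sum _ fun j _ => (hf₂ j).pow 2, Finset.mul_sum, Finset.mul_sum, ← Finset.sum_add_distrib]
  refine Finset.sum_congr rfl fun j _ => ?_
  rw [lap_comp (φ := fun r => r ^ 2) (φ' := fun r => 2 * r) (φ'' := fun _ => 2) (hf₂ j)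
      (fun _ => by simpa using hasDerivAt_pow 2 _)
      (fun _ => by simpa using (hasDerivAt_id _).const_mul (2 : ℝ)),
    dirDeriv_lap hf]
  ring

lemma lap_norm_gradient_sq_div (hf : ContDiff ℝ 3 f) (hf0 : ∀ z, f z ≠ 0)
    (x : EuclideanSpace ℝ (Fin n)) :
    lap (fun y => ‖gradient f y‖ ^ 2 / f y) x
      = 2 * (∑ j, dirDeriv (𝐞 j) f x * dirDeriv (𝐞 j) (lap f) x) / f x
        - ‖gradient f x‖ ^ 2 * lap f x / f x ^ 2
        + 2 / f x ^ 3 * ∑ i, ∑ j, (f x * dirDeriv (𝐞 i) (dirDeriv (𝐞 j) f) x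
            - dirDeriv (𝐞 i) f x * dirDeriv (𝐞 j) f x) ^ 2 := by
  have hf₂ : ContDiff ℝ 2 f := hf.of_le (by norm_num)
  have hcross : ∑ i, dirDeriv (𝐞 i) (fun y => ‖gradient f y‖ ^ 2) x * dirDeriv (𝐞 i) f x
      = 2 * ∑ i, dirDeriv (𝐞 i) f x
          * ∑ j, dirDeriv (𝐞 j) f x * dirDeriv (𝐞 i) (dirDeriv (𝐞 j) f) x := by
    rw [Finset.mul_sum]
    exact Finset.sum_congr rfl fun i _ => by rw [dirDeriv_norm_gradient_sq hf₂]; ring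
  rw [lap_div (contDiff_norm_gradient_sq hf (by norm_num)) hf₂ hf0, lap_norm_gradient_sq hf, hcross,
    sum_sum_mul_sub_mul_sq]
  simp only [norm_gradient_sq]
  rw [Finset.sum_comm (f := fun j i => dirDeriv (𝐞 i) (dirDeriv (𝐞 j) f) x ^ 2)]
  have := hf0 x
  field_simp
  ring

lemma le_lap_norm_gradient_sq_div (hf : ContDiff ℝ 3 f) (hpos : ∀ z, 0 < f z)
    (x : EuclideanSpace ℝ (Fin n)) :
    2 * (∑ j, dirDeriv (𝐞 j) f x * dirDeriv (𝐞 j) (lap f) x) / f x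
        - ‖gradient f x‖ ^ 2 * lap f x / f x ^ 2
      ≤ lap (fun y => ‖gradient f y‖ ^ 2 / f y) x := by
  rw [lap_norm_gradient_sq_div hf (fun z => (hpos z).ne') x]
  have := hpos x
  exact le_add_of_nonneg_right (by positivity)

lemma lap_mul_log_div {M : ℝ} (hM : M ≠ 0) (hf : ContDiff ℝ 2 f) (hf0 : ∀ z, f z ≠ 0)
    (x : EuclideanSpace ℝ (Fin n)) :
    lap (fun y => f y * Real.log (M / f y)) x
      = (Real.log (M / f x) - 1) * lap f x - ‖gradient f x‖ ^ 2 / f x := by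
  have hφ' : ∀ z, HasDerivAt (fun r => Real.log (M / r) - 1) (-(f z)⁻¹) (f z) := fun z => by
    refine (((hasDerivAt_const _ M).div (hasDerivAt_id _) (hf0 z)).log
      (div_ne_zero hM (hf0 z))).sub_const 1 |>.congr_deriv ?_
    have := hf0 z
    simp only [Pi.div_apply, id]
    field_simp
    ring
  rw [lap_comp (φ := fun r => r * Real.log (M / r)) (φ' := fun r => Real.log (M / r) - 1)
    (φ'' := fun r => -r⁻¹) hf (fun z => hasDerivAt_mul_log_div hM (hf0 z)) hφ']
  ring

lemma hasDerivWithinAt_norm_gradient_sq_div {w : ℝ → EuclideanSpace ℝ (Fin n) → ℝ}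
    {I : Set ℝ} {t c : ℝ} {d : Fin n → ℝ} {x : EuclideanSpace ℝ (Fin n)}
    (hw : HasDerivWithinAt (fun s => w s x) c I t)
    (hdw : ∀ j, HasDerivWithinAt (fun s => dirDeriv (𝐞 j) (w s) x) (d j) I t) (hx : w t x ≠ 0) :
    HasDerivWithinAt (fun s => ‖gradient (w s) x‖ ^ 2 / w s x)
      (2 * (∑ j, dirDeriv (𝐞 j) (w t) x * d j) / w t x - ‖gradient (w t) x‖ ^ 2 * c / w t x ^ 2)
      I t := by
  simp only [norm_gradient_sq]
  have hN : HasDerivWithinAt (fun s => ∑ j, dirDeriv (𝐞 j) (w s) x ^ 2)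
      (∑ j, 2 * dirDeriv (𝐞 j) (w t) x * d j) I t :=
    HasDerivWithinAt.fun_sum fun j _ => ((hdw j).pow 2).congr_deriv (by norm_num)
  refine (hN.div hw hx).congr_deriv ?_
  simp only [mul_assoc, ← Finset.mul_sum]
  field_simp

end Laplacian

section SpaceTime

variable {E : Type*} [NormedAddCommGroup E] [NormedSpace ℝ E] {G : E × ℝ → ℝ}
  {G' : E × ℝ →L[ℝ] ℝ} {I : Set ℝ} {x : E} {s : ℝ}

lemma ContDiffOn.contDiff_spaceSlice {k : WithTop ℕ∞} {t : ℝ} (hG : ContDiffOn ℝ k G (univ ×ˢ I))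
    (ht : t ∈ I) : ContDiff ℝ k (fun z => G (z, t)) :=
  contDiffOn_univ.mp <| hG.comp (contDiff_id.prodMk contDiff_const).contDiffOn
    fun z _ => ⟨mem_univ z, ht⟩

lemma HasFDerivWithinAt.hasFDerivAt_spaceSlice (h : HasFDerivWithinAt G G' (univ ×ˢ I) (x, s))
    (hs : s ∈ I) :
    HasFDerivAt (fun z => G (z, s)) (G'.comp (ContinuousLinearMap.inl ℝ E ℝ)) x := by
  have h' := h.comp (f := fun z => (z, s)) x
    ((hasFDerivAt_prodMk_left (𝕜 := ℝ) x s).hasFDerivWithinAt (s := univ))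
    fun z _ => ⟨mem_univ z, hs⟩
  exact hasFDerivWithinAt_univ.mp h'

lemma HasFDerivWithinAt.hasDerivWithinAt_timeSlice (h : HasFDerivWithinAt G G' (univ ×ˢ I) (x, s)) :
    HasDerivWithinAt (fun r => G (x, r)) (G' (0, 1)) I s :=
  h.comp_hasDerivWithinAt s ((hasDerivAt_const s x).prodMk (hasDerivAt_id s)).hasDerivWithinAt
    fun _ hr => ⟨mem_univ x, hr⟩

lemma hasDerivWithinAt_fderiv_spaceSlice {a b t : ℝ} (hab : a < b)
    (hG : ContDiffOn ℝ 2 G (univ ×ˢ Icc a b)) (ht : t ∈ Icc a b) (x v : E) :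
    HasDerivWithinAt (fun s => fderiv ℝ (fun z => G (z, s)) x v)
      (fderiv ℝ (fun z => derivWithin (fun r => G (z, r)) (Icc a b) t) x v) (Icc a b) t := by
  set Ω : Set (E × ℝ) := univ ×ˢ Icc a b with hΩ_def
  have hΩ : UniqueDiffOn ℝ Ω := uniqueDiffOn_univ.prod (uniqueDiffOn_Icc hab)
  have hmem : ∀ z, ∀ r ∈ Icc a b, (z, r) ∈ Ω := fun z r hr => ⟨mem_univ z, hr⟩
  set G' := fderivWithin ℝ G Ω
  have hG₁ : ∀ z, ∀ r ∈ Icc a b, HasFDerivWithinAt G (G' (z, r)) Ω (z, r) := fun z r hr =>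
    (hG.differentiableOn two_ne_zero _ (hmem z r hr)).hasFDerivWithinAt
  set G'' := fderivWithin ℝ G' Ω (x, t)
  have hG₂ : HasFDerivWithinAt G' G'' Ω (x, t) :=
    ((hG.fderivWithin hΩ (m := 1) (by norm_num)).differentiableOn one_ne_zero _
      (hmem x t ht)).hasFDerivWithinAt
  -- Both sides of the claim are entries of `G''`, in the two orders; `G''` is symmetric because
  -- `(x, t)` is a limit of interior points of `Ω`.
  have hsymm : G'' (0, 1) (v, 0) = G'' (v, 0) (0, 1) := by
    have hx : (x, t) ∈ closure (interior Ω) := by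
      rw [hΩ_def, interior_prod_eq, interior_univ, interior_Icc, closure_prod_eq, closure_univ,
        closure_Ioo hab.ne]
      exact hmem x t ht
    exact (hG _ (hmem x t ht)).isSymmSndFDerivWithinAt (by simp) hΩ hx (hmem x t ht) _ _
  have hspace : ∀ r ∈ Icc a b, fderiv ℝ (fun z => G (z, r)) x v = G' (x, r) (v, 0) :=
    fun r hr => by rw [((hG₁ x r hr).hasFDerivAt_spaceSlice hr).fderiv]; rfl
  have htime : (fun z => derivWithin (fun r => G (z, r)) (Icc a b) t) = fun z => G' (z, t) (0, 1) :=
    funext fun z => (hG₁ z t ht).hasDerivWithinAt_timeSlice.derivWithin (uniqueDiffOn_Icc hab t ht)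
  have happly : ∀ w : E × ℝ, HasFDerivWithinAt (fun p => G' p w)
      ((ContinuousLinearMap.apply ℝ ℝ w).comp G'') Ω (x, t) := fun w =>
    (ContinuousLinearMap.apply ℝ ℝ w).hasFDerivAt.comp_hasFDerivWithinAt (x, t) hG₂
  have hvalue : fderiv ℝ (fun z => G' (z, t) (0, 1)) x v = G'' (v, 0) (0, 1) := by
    rw [((happly (0, 1)).hasFDerivAt_spaceSlice ht).fderiv]; rfl
  rw [htime, hvalue, ← hsymm]
  exact (happly (v, 0)).hasDerivWithinAt_timeSlice.congr hspace (hspace t ht)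

end SpaceTime

section HeatEquation

variable {n : ℕ} {u : EuclideanSpace ℝ (Fin n) → ℝ → ℝ} {a b t : ℝ}

lemma hasDerivWithinAt_of_heat
    (hu : ContDiffOn ℝ 2 (fun p : EuclideanSpace ℝ (Fin n) × ℝ => u p.1 p.2) (univ ×ˢ Icc a b))
    (hheat : ∀ x, ∀ t ∈ Icc a b, derivWithin (fun s => u x s) (Icc a b) t = lap (fun y => u y t) x)
    (ht : t ∈ Icc a b) (x : EuclideanSpace ℝ (Fin n)) :
    HasDerivWithinAt (fun s => u x s) (lap (fun y => u y t) x) (Icc a b) t := by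
  rw [← hheat x t ht]
  exact ((hu.differentiableOn two_ne_zero _ ⟨mem_univ x, ht⟩).hasFDerivWithinAt
    |>.hasDerivWithinAt_timeSlice).differentiableWithinAt.hasDerivWithinAt

lemma hasDerivWithinAt_dirDeriv_of_heat (hab : a < b)
    (hu : ContDiffOn ℝ 2 (fun p : EuclideanSpace ℝ (Fin n) × ℝ => u p.1 p.2) (univ ×ˢ Icc a b))
    (hheat : ∀ x, ∀ t ∈ Icc a b, derivWithin (fun s => u x s) (Icc a b) t = lap (fun y => u y t) x)
    (ht : t ∈ Icc a b) (x v : EuclideanSpace ℝ (Fin n)) :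
    HasDerivWithinAt (fun s => dirDeriv v (fun y => u y s) x)
      (dirDeriv v (lap fun y => u y t) x) (Icc a b) t := by
  have h : HasDerivWithinAt (fun s => dirDeriv v (fun y => u y s) x)
      (dirDeriv v (fun z => derivWithin (fun r => u z r) (Icc a b) t) x) (Icc a b) t :=
    hasDerivWithinAt_fderiv_spaceSlice hab hu ht x v
  rwa [funext fun z => hheat z t ht] at h

end HeatEquation

theorem hamilton_quantity_subsolution_general
    (n : ℕ) (T M : ℝ) (hT : 0 < T) (hM : 0 < M)
    (u : EuclideanSpace ℝ (Fin n) → ℝ → ℝ)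
    (hsmooth : ContDiffOn ℝ (⊤ : ℕ∞)
      (fun p : EuclideanSpace ℝ (Fin n) × ℝ => u p.1 p.2) (univ ×ˢ Icc 0 T))
    (hpos : ∀ x, ∀ t ∈ Icc (0 : ℝ) T, 0 < u x t)
    (hheat : ∀ x, ∀ t ∈ Icc (0 : ℝ) T,
      derivWithin (fun s => u x s) (Icc 0 T) t = lap (fun y => u y t) x) :
    ∀ x, ∀ t ∈ Ioc (0 : ℝ) T,
      0 ≤ lap (fun y =>
              t * (‖gradient (fun z => u z t) y‖ ^ 2 / u y t)
                - u y t * Real.log (M / u y t)) x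
          - derivWithin (fun s =>
              s * (‖gradient (fun z => u z s) x‖ ^ 2 / u x s)
                - u x s * Real.log (M / u x s)) (Icc 0 T) t := by
  intro x t ht
  have ht' : t ∈ Icc 0 T := Ioc_subset_Icc_self ht
  have hu : ContDiffOn ℝ 2 (fun p : EuclideanSpace ℝ (Fin n) × ℝ => u p.1 p.2) (univ ×ˢ Icc 0 T) :=
    hsmooth.of_le (WithTop.coe_le_coe.2 le_top)
  have hf : ContDiff ℝ 3 (fun y => u y t) :=
    (hsmooth.contDiff_spaceSlice ht').of_le (WithTop.coe_le_coe.2 le_top)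
  have hf₂ : ContDiff ℝ 2 (fun y => u y t) := hf.of_le (by norm_num)
  have hf0 : ∀ z, u z t ≠ 0 := fun z => (hpos z t ht').ne'
  have hut := hasDerivWithinAt_of_heat hu hheat ht' x
  have hΦt : HasDerivWithinAt (fun s => s * (‖gradient (fun z => u z s) x‖ ^ 2 / u x s)
      - u x s * Real.log (M / u x s)) _ (Icc 0 T) t :=
    ((hasDerivAt_id' t).hasDerivWithinAt.mul (hasDerivWithinAt_norm_gradient_sq_div
      (w := fun s y => u y s) hut (fun j => hasDerivWithinAt_dirDeriv_of_heat hT hu hheat ht' x _)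
      (hf0 x))).sub ((hasDerivAt_mul_log_div hM.ne' (hf0 x)).comp_hasDerivWithinAt t hut)
  have hQ : ContDiff ℝ 2 (fun y => ‖gradient (fun z => u z t) y‖ ^ 2 / u y t) :=
    (contDiff_norm_gradient_sq hf (by norm_num)).div hf₂ hf0
  have hS : ContDiff ℝ 2 (fun y => u y t * Real.log (M / u y t)) :=
    hf₂.mul ((contDiff_const.div hf₂ hf0).log fun z => div_ne_zero hM.ne' (hf0 z))
  rw [hΦt.derivWithin (uniqueDiffOn_Icc hT t ht'), lap_sub (contDiff_const.mul hQ) hS,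
    lap_const_mul hQ, lap_mul_log_div hM.ne' hf₂ hf0]
  linarith [mul_le_mul_of_nonneg_left (le_lap_norm_gradient_sq_div hf (hpos · t ht') x) ht.1.le]

/-- For a positive bounded solution `u` of the heat equation on ℝⁿ × [0,T],
the function `Φ = t·‖∇u‖²/u − u·log(M/u)` is a subsolution of the heat
equation on ℝⁿ × (0,T]: `ΔΦ − ∂ₜΦ ≥ 0`. -/
theorem hamilton_quantity_subsolution
    (n : ℕ) (hn : 1 ≤ n) (T M : ℝ) (hT : 0 < T) (hM : 0 < M)
    (u : EuclideanSpace ℝ (Fin n) → ℝ → ℝ)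
    (hsmooth : ContDiffOn ℝ (⊤ : ℕ∞)
      (fun p : EuclideanSpace ℝ (Fin n) × ℝ => u p.1 p.2) (univ ×ˢ Icc 0 T))
    (hpos : ∀ x, ∀ t ∈ Icc (0 : ℝ) T, 0 < u x t)
    (hbound : ∀ x, ∀ t ∈ Icc (0 : ℝ) T, u x t ≤ M)
    (hheat : ∀ x, ∀ t ∈ Icc (0 : ℝ) T,
      derivWithin (fun s => u x s) (Icc 0 T) t = lap (fun y => u y t) x) :
    ∀ x, ∀ t ∈ Ioc (0 : ℝ) T,
      0 ≤ lap (fun y =>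
              t * (‖gradient (fun z => u z t) y‖ ^ 2 / u y t)
                - u y t * Real.log (M / u y t)) x
          - derivWithin (fun s =>
              s * (‖gradient (fun z => u z s) x‖ ^ 2 / u x s)
                - u x s * Real.log (M / u x s)) (Icc 0 T) t :=
  hamilton_quantity_subsolution_general n T M hT hM u hsmooth hpos hheat
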